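/- arXiv:2303.05592 — 9 statements merged into one kernel-verified Lean document; each statement's English description precedes it below -/
import Mathlib

section
/- There exist infinitely many complex numbers $z \neq 0$ such that $e^z + e^{1/z} = 1$. -/
open Complex

/-!
For large `n`, put `A = 2πn`. Since `e^{1/z} ≈ 1 + 1/z` for large `z`, solutions should satisfy
`e^z ≈ -1/z`, i.e. `z ≈ c_A := A i + log (i / A)`. A solution is exactly a fixed point of
`T(w) = A i + log (1 - e^{1/w})`, and on the disc of radius `1/2` about `c_A` the imaginary part of
`1 - e^{1/w} ≈ -1/w` is at least `1/(5A)`, so `log` is `5A`-Lipschitz there while `w ↦ e^{1/w}`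
is `3/A²`-Lipschitz. Hence `T` is a `1/2`-contraction moving `c_A` by at most `1/4`, and the
contraction mapping principle gives a solution with imaginary part at least `A`. Letting `n → ∞`
gives solutions with unbounded imaginary part.
-/

open Metric Set Filter
open scoped Real

theorem Metric.exists_fixedPoint_of_lipschitzOnWith_closedBall {α : Type*} [MetricSpace α]
    [CompleteSpace α] {f : α → α} {K : NNReal} (hK : K < 1) {x : α} {r : ℝ}
    (hf : LipschitzOnWith K f (closedBall x r)) (hx : dist (f x) x ≤ (1 - K) * r) :
    ∃ y ∈ closedBall x r, f y = y := by
  have hr : 0 ≤ r := nonneg_of_mul_nonneg_right (dist_nonneg.trans hx) (sub_pos.2 hK)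
  have hmaps : MapsTo f (closedBall x r) (closedBall x r) := fun y hy =>
    calc dist (f y) x ≤ dist (f y) (f x) + dist (f x) x := dist_triangle _ _ _
      _ ≤ K * r + (1 - K) * r := by
        gcongr
        exact (hf.dist_le_mul y hy x (mem_closedBall_self hr)).trans
          (mul_le_mul_of_nonneg_left hy K.2)
      _ = r := by ring
  obtain ⟨y, hy, hfix, -⟩ := ContractingWith.exists_fixedPoint' isClosed_closedBall.isComplete
    hmaps ⟨hK, hf.mapsToRestrict hmaps⟩ (mem_closedBall_self hr) (edist_ne_top _ _)
  exact ⟨y, hy, hfix⟩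

theorem Complex.norm_log_sub_log_le {δ : ℝ} (hδ : 0 < δ) {u v : ℂ} (hu : δ ≤ u.im)
    (hv : δ ≤ v.im) : ‖log u - log v‖ ≤ ‖u - v‖ / δ := by
  have hderiv (z : ℂ) (hz : z ∈ {z : ℂ | δ ≤ z.im}) :
      HasDerivWithinAt log z⁻¹ {z : ℂ | δ ≤ z.im} z :=
    (hasDerivAt_log (Or.inr (hδ.trans_le hz).ne')).hasDerivWithinAt
  have hbound (z : ℂ) (hz : z ∈ {z : ℂ | δ ≤ z.im}) : ‖z⁻¹‖ ≤ δ⁻¹ := by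
    rw [norm_inv]
    exact inv_anti₀ hδ (hz.out.trans ((le_abs_self _).trans (abs_im_le_norm z)))
  simpa [div_eq_inv_mul] using
    (convex_halfSpace_im_ge δ).norm_image_sub_le_of_norm_hasDerivWithin_le hderiv hbound hv hu

theorem Complex.norm_exp_sub_exp_le {t : ℝ} {a b : ℂ} (ha : a.re ≤ t) (hb : b.re ≤ t) :
    ‖exp a - exp b‖ ≤ Real.exp t * ‖a - b‖ := by
  have hderiv (z : ℂ) (_ : z ∈ {z : ℂ | z.re ≤ t}) :
      HasDerivWithinAt exp (exp z) {z : ℂ | z.re ≤ t} z :=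
    (hasDerivAt_exp z).hasDerivWithinAt
  have hbound (z : ℂ) (hz : z ∈ {z : ℂ | z.re ≤ t}) : ‖exp z‖ ≤ Real.exp t := by
    rw [norm_exp]
    exact Real.exp_le_exp.2 hz
  exact (convex_halfSpace_re_le t).norm_image_sub_le_of_norm_hasDerivWithin_le hderiv hbound hb ha

namespace ExpAddExpInv

noncomputable def approxRoot (A : ℝ) : ℂ := -Real.log A + (A + π / 2) * I

noncomputable def branchMap (A : ℝ) (w : ℂ) : ℂ := A * I + log (1 - exp w⁻¹)

variable {A : ℝ} {w : ℂ}

theorem approxRoot_eq (hA : 0 < A) : approxRoot A = A * I + log (I / A) := by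
  rw [div_eq_inv_mul, ← ofReal_inv, log_ofReal_mul (inv_pos.2 hA) I_ne_zero, log_I,
    Real.log_inv, approxRoot]
  push_cast
  ring

@[simp] theorem approxRoot_re : (approxRoot A).re = -Real.log A := by simp [approxRoot]

@[simp] theorem approxRoot_im : (approxRoot A).im = A + π / 2 := by simp [approxRoot]

theorem le_im_of_mem (hw : w ∈ closedBall (approxRoot A) (1 / 2)) : A ≤ w.im := by
  have h := (abs_im_le_norm (w - approxRoot A)).trans (mem_closedBall_iff_norm.1 hw)
  rw [sub_im, approxRoot_im] at h
  linarith [(abs_le.1 h).1, Real.pi_gt_three]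

theorem le_norm_of_mem (hw : w ∈ closedBall (approxRoot A) (1 / 2)) : A ≤ ‖w‖ :=
  (le_im_of_mem hw).trans ((le_abs_self _).trans (abs_im_le_norm w))

theorem ne_zero_of_mem (hA : 0 < A) (hw : w ∈ closedBall (approxRoot A) (1 / 2)) : w ≠ 0 :=
  norm_pos_iff.1 (hA.trans_le (le_norm_of_mem hw))

theorem norm_exp_inv_sub_one_sub_inv_le (hA₁ : 1 ≤ A)
    (hw : w ∈ closedBall (approxRoot A) (1 / 2)) : ‖exp w⁻¹ - 1 - w⁻¹‖ ≤ (A ^ 2)⁻¹ := by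
  have hinv : ‖w⁻¹‖ ≤ A⁻¹ := by
    rw [norm_inv]
    exact inv_anti₀ (by linarith) (le_norm_of_mem hw)
  calc ‖exp w⁻¹ - 1 - w⁻¹‖ ≤ ‖w⁻¹‖ ^ 2 :=
        norm_exp_sub_one_sub_id_le (hinv.trans (inv_le_one_of_one_le₀ hA₁))
    _ ≤ (A⁻¹) ^ 2 := by gcongr
    _ = (A ^ 2)⁻¹ := inv_pow A 2

section Large

variable (hA₁ : 1 ≤ A) (hA : 20 * (Real.log A + 3) ≤ A)
include hA₁ hA

theorem norm_le_of_mem (hw : w ∈ closedBall (approxRoot A) (1 / 2)) : ‖w‖ ≤ 2 * A := by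
  have hlog := Real.log_nonneg hA₁
  have hc := norm_le_abs_re_add_abs_im (approxRoot A)
  rw [approxRoot_re, approxRoot_im, abs_neg, abs_of_nonneg hlog,
    abs_of_nonneg (by positivity)] at hc
  linarith [norm_le_of_mem_closedBall hw, Real.pi_lt_d2]

theorem inv_le_im_one_sub_exp_inv (hw : w ∈ closedBall (approxRoot A) (1 / 2)) :
    (5 * A)⁻¹ ≤ (1 - exp w⁻¹).im := by
  have him := le_im_of_mem hw
  have hnorm := norm_le_of_mem hA₁ hA hw
  have hA60 : 60 ≤ A := by linarith [Real.log_nonneg hA₁]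
  have hpos : 0 < ‖w‖ := by linarith [le_norm_of_mem hw]
  have hmain : (4 * A)⁻¹ ≤ (-w⁻¹).im := by
    rw [neg_im, inv_im, neg_div, neg_neg, normSq_eq_norm_sq]
    calc (4 * A)⁻¹ = A / (2 * A) ^ 2 := by field_simp; ring
      _ ≤ w.im / ‖w‖ ^ 2 := by gcongr; linarith
  have herr := (abs_im_le_norm _).trans (norm_exp_inv_sub_one_sub_inv_le hA₁ hw)
  have hsplit : 1 - exp w⁻¹ = -w⁻¹ - (exp w⁻¹ - 1 - w⁻¹) := by ring
  have hnum : (5 * A)⁻¹ + (A ^ 2)⁻¹ ≤ (4 * A)⁻¹ := by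
    field_simp
    nlinarith
  rw [hsplit, sub_im]
  linarith [le_abs_self (exp w⁻¹ - 1 - w⁻¹).im]

theorem dist_branchMap_le {w₁ w₂ : ℂ} (hw₁ : w₁ ∈ closedBall (approxRoot A) (1 / 2))
    (hw₂ : w₂ ∈ closedBall (approxRoot A) (1 / 2)) :
    dist (branchMap A w₁) (branchMap A w₂) ≤ 2⁻¹ * dist w₁ w₂ := by
  have hA60 : 60 ≤ A := by linarith [Real.log_nonneg hA₁]
  have hre {w : ℂ} (hw : w ∈ closedBall (approxRoot A) (1 / 2)) : w⁻¹.re ≤ 1 :=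
    (re_le_norm _).trans <| by
      rw [norm_inv]
      exact inv_le_one_of_one_le₀ (hA₁.trans (le_norm_of_mem hw))
  calc dist (branchMap A w₁) (branchMap A w₂) = ‖log (1 - exp w₁⁻¹) - log (1 - exp w₂⁻¹)‖ := by
        rw [dist_eq, branchMap, branchMap, add_sub_add_left_eq_sub]
    _ ≤ ‖(1 - exp w₁⁻¹) - (1 - exp w₂⁻¹)‖ / (5 * A)⁻¹ :=
        norm_log_sub_log_le (by positivity) (inv_le_im_one_sub_exp_inv hA₁ hA hw₁)
          (inv_le_im_one_sub_exp_inv hA₁ hA hw₂)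
    _ = 5 * A * ‖exp w₂⁻¹ - exp w₁⁻¹‖ := by rw [sub_sub_sub_cancel_left, div_inv_eq_mul, mul_comm]
    _ ≤ 5 * A * (Real.exp 1 * dist w₂⁻¹ w₁⁻¹) := by
        rw [dist_eq]
        gcongr
        exact norm_exp_sub_exp_le (hre hw₂) (hre hw₁)
    _ = 5 * A * Real.exp 1 * (dist w₁ w₂ / (‖w₂‖ * ‖w₁‖)) := by
        rw [dist_inv_inv₀ (ne_zero_of_mem (by linarith) hw₂) (ne_zero_of_mem (by linarith) hw₁),
          dist_comm]
        ring
    _ ≤ 5 * A * 3 * (dist w₁ w₂ / (A * A)) := by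
        have := le_norm_of_mem hw₁
        have := le_norm_of_mem hw₂
        gcongr
        exact Real.exp_one_lt_d9.le.trans (by norm_num)
    _ ≤ 2⁻¹ * dist w₁ w₂ := by
        rw [show 5 * A * 3 * (dist w₁ w₂ / (A * A)) = 15 / A * dist w₁ w₂ by field_simp; ring]
        gcongr
        rw [div_le_iff₀ (by positivity)]
        linarith

theorem dist_branchMap_approxRoot_le :
    dist (branchMap A (approxRoot A)) (approxRoot A) ≤ 4⁻¹ := by
  set c := approxRoot A with hc_def
  have hc : c ∈ closedBall c (1 / 2) := mem_closedBall_self (by norm_num)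
  have hlog := Real.log_nonneg hA₁
  have hA0 : 0 < A := by linarith
  have hcA : A ≤ ‖c‖ := le_norm_of_mem hc
  have hc0 : c ≠ 0 := ne_zero_of_mem hA0 hc
  have hI : (5 * A)⁻¹ ≤ (I / A).im := by
    rw [div_ofReal_im, I_im, one_div]
    gcongr
    linarith
  have hlead : ‖-c⁻¹ - I / A‖ ≤ (Real.log A + 2) / A ^ 2 := by
    have hid : -c⁻¹ - I / A = (π / 2 + Real.log A * I) / (A * c) := by
      have hA' : (A : ℂ) ≠ 0 := ofReal_ne_zero.2 hA0.ne'
      rw [eq_div_iff (mul_ne_zero hA' hc0), sub_mul, neg_mul,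
        show c⁻¹ * (A * c) = A by field_simp, show I / A * (A * c) = I * c by field_simp,
        hc_def, approxRoot]
      linear_combination (-(A + π / 2 : ℂ)) * I_sq
    rw [hid, norm_div, norm_mul, norm_real, Real.norm_of_nonneg hA0.le, sq]
    gcongr
    calc ‖(π / 2 : ℂ) + Real.log A * I‖ ≤ π / 2 + Real.log A := by
          refine (norm_add_le _ _).trans_eq ?_
          simp [abs_of_nonneg hlog, abs_of_pos Real.pi_pos]
      _ ≤ Real.log A + 2 := by linarith [Real.pi_lt_d2]
  calc dist (branchMap A c) c = ‖log (1 - exp c⁻¹) - log (I / A)‖ := by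
        rw [dist_eq]
        nth_rewrite 2 [hc_def]
        rw [approxRoot_eq hA0, branchMap, add_sub_add_left_eq_sub]
    _ ≤ ‖(1 - exp c⁻¹) - I / A‖ / (5 * A)⁻¹ :=
        norm_log_sub_log_le (by positivity) (inv_le_im_one_sub_exp_inv hA₁ hA hc) hI
    _ = 5 * A * ‖(-c⁻¹ - I / A) - (exp c⁻¹ - 1 - c⁻¹)‖ := by
        rw [div_inv_eq_mul, mul_comm]
        ring_nf
    _ ≤ 5 * A * ((Real.log A + 2) / A ^ 2 + (A ^ 2)⁻¹) := by
        gcongr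
        exact (norm_sub_le _ _).trans (add_le_add hlead (norm_exp_inv_sub_one_sub_inv_le hA₁ hc))
    _ ≤ 4⁻¹ := by
        rw [show 5 * A * ((Real.log A + 2) / A ^ 2 + (A ^ 2)⁻¹) = 5 * (Real.log A + 3) / A by
          field_simp; ring]
        rw [div_le_iff₀ hA0]
        linarith

theorem exists_fixedPoint_branchMap :
    ∃ z ∈ closedBall (approxRoot A) (1 / 2), branchMap A z = z := by
  refine Metric.exists_fixedPoint_of_lipschitzOnWith_closedBall (K := 2⁻¹) (by norm_num)
    (LipschitzOnWith.of_dist_le_mul fun w₁ hw₁ w₂ hw₂ => ?_) ?_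
  · simpa using dist_branchMap_le hA₁ hA hw₁ hw₂
  · refine (dist_branchMap_approxRoot_le hA₁ hA).trans_eq ?_
    norm_num

theorem exists_solution (hexp : exp (A * I) = 1) :
    ∃ z, (z ≠ 0 ∧ exp z + exp (1 / z) = 1) ∧ A ≤ z.im := by
  obtain ⟨z, hz, hfix⟩ := exists_fixedPoint_branchMap hA₁ hA
  have hA0 : 0 < A := by linarith [Real.log_nonneg hA₁]
  have hv : 1 - exp z⁻¹ ≠ 0 := fun h => by
    have := inv_le_im_one_sub_exp_inv hA₁ hA hz
    rw [h, zero_im] at this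
    linarith [inv_pos.2 (mul_pos (by norm_num : (0 : ℝ) < 5) hA0)]
  refine ⟨z, ⟨ne_zero_of_mem hA0 hz, ?_⟩, le_im_of_mem hz⟩
  calc exp z + exp (1 / z) = exp (branchMap A z) + exp z⁻¹ := by rw [hfix, one_div]
    _ = 1 := by rw [branchMap, exp_add, hexp, exp_log hv]; ring

end Large

theorem eventually_one_le_and_log_bound : ∀ᶠ A : ℝ in atTop, 1 ≤ A ∧ 20 * (Real.log A + 3) ≤ A := by
  filter_upwards [Real.isLittleO_log_id_atTop.bound (c := 40⁻¹) (by norm_num),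
    eventually_ge_atTop 120] with A hlog hA
  rw [Real.norm_eq_abs, Real.norm_eq_abs, id, abs_of_pos (show 0 < A by linarith)] at hlog
  exact ⟨by linarith, by linarith [le_abs_self (Real.log A)]⟩

end ExpAddExpInv

/-- There are infinitely many nonzero complex `z` with `e^z + e^(1/z) = 1`. -/
theorem infinite_solutions_exp_exp_inv :
    {z : ℂ | z ≠ 0 ∧ Complex.exp z + Complex.exp (1 / z) = 1}.Infinite := by
  refine Set.Infinite.of_image im (Set.infinite_of_not_bddAbove fun ⟨M, hM⟩ => ?_)
  have h2πn : Tendsto (fun n : ℕ => 2 * π * n) atTop atTop :=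
    tendsto_natCast_atTop_atTop.const_mul_atTop Real.two_pi_pos
  obtain ⟨n, ⟨hn₁, hn⟩, hnM⟩ :=
    (h2πn.eventually
      (ExpAddExpInv.eventually_one_le_and_log_bound.and (eventually_gt_atTop M))).exists
  obtain ⟨z, hz, hnz⟩ := ExpAddExpInv.exists_solution hn₁ hn (by
    rw [show ((2 * π * n : ℝ) : ℂ) * I = n * (2 * π * I) by push_cast; ring]
    exact exp_nat_mul_two_pi_mul_I n)
  exact (hnM.trans_le hnz).not_ge (hM ⟨z, hz, rfl⟩)
end

section
/- The set of complex numbers $z$ with $e^z = z$ is infinite. -/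
/-!
Writing `z = x + iy`, the equation `e^z = z` says `e^x cos y = x` and `e^x sin y = y`. Taking
`x = y cot y` reduces it to the real equation `e^(y cot y) sin y = y`, and the intermediate value
theorem gives a root `y` in every interval `[2πn + π/4, 2πn + π/2]`: at the left end the left
side is `e^y √2/2 > y`, at the right end it is `1 < y`.
-/

open Real Set

theorem Complex.exp_mk_eq_self {x y : ℝ} (hx : rexp x * Real.cos y = x)
    (hy : rexp x * Real.sin y = y) :
    Complex.exp ⟨x, y⟩ = ⟨x, y⟩ :=
  Complex.ext (by simpa [Complex.exp_re] using hx) (by simpa [Complex.exp_im] using hy)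

theorem le_exp_div_two (a : ℝ) : a ≤ rexp a / 2 :=
  calc a ≤ rexp (a - 1) := by linarith [add_one_le_exp (a - 1)]
    _ = rexp a * rexp (-1) := by rw [sub_eq_add_neg, exp_add]
    _ ≤ rexp a / 2 := by nlinarith [exp_pos a, exp_neg_one_lt_half]

theorem sin_pos_of_mem_Icc_pi_div_four_pi_div_two {t : ℝ} (ht : t ∈ Icc (π / 4) (π / 2)) :
    0 < sin t :=
  sin_pos_of_pos_of_lt_pi (by linarith [ht.1, pi_pos]) (by linarith [ht.2, pi_pos])

theorem exists_exp_mul_cot_mul_sin_eq {c : ℝ} (hc : 1 ≤ c + π / 2) :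
    ∃ t ∈ Icc (π / 4) (π / 2), rexp ((t + c) * cos t / sin t) * sin t = t + c := by
  have hsin : ∀ t ∈ Icc (π / 4) (π / 2), sin t ≠ 0 := fun t ht =>
    (sin_pos_of_mem_Icc_pi_div_four_pi_div_two ht).ne'
  let f := fun t => rexp ((t + c) * cos t / sin t) * sin t - (t + c)
  have hcont : ContinuousOn f (Icc (π / 4) (π / 2)) := by
    fun_prop (disch := assumption)
  have hleft : 0 ≤ f (π / 4) := by
    simp only [f]
    rw [cos_pi_div_four, sin_pi_div_four, mul_div_assoc, div_self (by positivity), mul_one]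
    nlinarith [le_exp_div_two (π / 4 + c), exp_pos (π / 4 + c), one_lt_sqrt_two]
  have hright : f (π / 2) ≤ 0 := by
    simp only [f, cos_pi_div_two, sin_pi_div_two, mul_zero, zero_div, exp_zero, mul_one]
    linarith
  obtain ⟨t, ht, hroot⟩ :=
    intermediate_value_Icc' (by linarith [pi_pos]) hcont ⟨hright, hleft⟩
  exact ⟨t, ht, sub_eq_zero.mp hroot⟩

theorem exists_exp_eq_self_lt_im (r : ℝ) : ∃ z : ℂ, Complex.exp z = z ∧ r < z.im := by
  obtain ⟨n, hrn⟩ := exists_nat_gt r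
  obtain ⟨t, ht, hroot⟩ :=
    exists_exp_mul_cot_mul_sin_eq (c := n * (2 * π)) (by nlinarith [pi_gt_three])
  have hsin : sin t ≠ 0 := (sin_pos_of_mem_Icc_pi_div_four_pi_div_two ht).ne'
  set y := t + n * (2 * π)
  set x := y * cos t / sin t
  refine ⟨⟨x, y⟩, Complex.exp_mk_eq_self ?_ ?_, ?_⟩
  · calc rexp x * cos y = rexp x * sin t * cos t / sin t := by
          rw [cos_add_nat_mul_two_pi]; field_simp
      _ = x := by rw [hroot]
  · rwa [sin_add_nat_mul_two_pi]
  · show r < y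
    nlinarith [ht.1, pi_gt_three, n.cast_nonneg (α := ℝ)]

/-- The set of complex numbers `z` with `e^z = z` is infinite. -/
theorem infinite_exp_fixed_points : {z : ℂ | Complex.exp z = z}.Infinite := by
  refine Set.Infinite.of_image Complex.im (Set.infinite_of_forall_exists_gt fun r => ?_)
  obtain ⟨z, hz, hrz⟩ := exists_exp_eq_self_lt_im r
  exact ⟨z.im, mem_image_of_mem _ hz, hrz⟩
end

section
/- There do not exist complex numbers $a, b$ such that $e^z - z = e^{az+b}$ for all complex $z$. -/
/-!
A function of the form `z ↦ e^(a z + b)` satisfies `f 0 * f (2 z) = f z ^ 2` for every `z`.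
For `f z = e^z - z` and a nonzero period `z = 2πi` of `exp`, the two sides are `1 - 2z` and
`(1 - z)^2`, which differ by `z^2 ≠ 0`.
-/

open Complex

theorem exp_affine_zero_mul_exp_affine_two_mul (a b z : ℂ) :
    exp (a * 0 + b) * exp (a * (2 * z) + b) = exp (a * z + b) ^ 2 := by
  rw [← exp_add, sq, ← exp_add]
  ring_nf

theorem exp_sub_self_zero_mul_ne_sq {z : ℂ} (hz : exp z = 1) (hz₀ : z ≠ 0) :
    (exp 0 - 0) * (exp (2 * z) - 2 * z) ≠ (exp z - z) ^ 2 := by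
  have hz₂ : exp (2 * z) = 1 := by rw [two_mul, exp_add, hz, one_mul]
  rw [hz₂, hz, exp_zero]
  intro h
  exact pow_ne_zero 2 hz₀ (by linear_combination -h)

/-- There are no complex `a, b` with `e^z - z = e^(a z + b)` for all complex `z`. -/
theorem no_linear_exp_representation :
    ¬ ∃ a b : ℂ, ∀ z : ℂ, Complex.exp z - z = Complex.exp (a * z + b) := by
  rintro ⟨a, b, h⟩
  have hperiod : exp (2 * Real.pi * I) = 1 := exp_two_pi_mul_I
  have hperiod₀ : (2 * Real.pi * I : ℂ) ≠ 0 := by simp [Real.pi_ne_zero, I_ne_zero]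
  apply exp_sub_self_zero_mul_ne_sq hperiod hperiod₀
  simp only [h]
  exact exp_affine_zero_mul_exp_affine_two_mul a b _
end

section
/- There do not exist complex numbers $a, b, c$ such that $e^z + e^{z^2} - 1 = e^{az^2 + bz + c}$ for all complex $z$. -/
/-!
Evaluating at `z = 0, ±1, ±2` suffices: the fourth central difference of a quadratic vanishes,
so any `f = exp ∘ Q` with `Q` quadratic satisfies `f 2 * f (-2) * f 0 ^ 6 = (f 1 * f (-1)) ^ 4`.
For `f z = e^z + e^(z^2) - 1` all five values are real, and with `x = e` the relation becomes
a polynomial identity in `x` that fails for every `x ≥ 2`.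
-/

open Complex

lemma four_point_relation_of_eq_exp_quadratic {f : ℂ → ℂ} {a b c : ℂ}
    (hf : ∀ z, f z = cexp (a * z ^ 2 + b * z + c)) :
    f 2 * f (-2) * f 0 ^ 6 = (f 1 * f (-1)) ^ 4 := by
  simp only [hf, ← exp_add, ← exp_nat_mul]
  congr 1
  push_cast
  ring

lemma four_point_poly_lt {x : ℝ} (hx : 2 ≤ x) :
    x ^ 2 * (x ^ 2 + x ^ 4 - 1) * (x ^ 6 - x ^ 2 + 1) < ((2 * x - 1) * (x ^ 2 - x + 1)) ^ 4 := by
  -- in powers of `x - 2` every coefficient of the difference is positive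
  obtain ⟨y, hy, rfl⟩ : ∃ y ≥ 0, x = 2 + y := ⟨x - 2, by linarith, by ring⟩
  rw [← sub_pos]
  ring_nf
  positivity

lemma exp_add_exp_sq_four_point_lt {f : ℝ → ℝ}
    (hf : ∀ t, f t = Real.exp t + Real.exp (t ^ 2) - 1) :
    f 2 * f (-2) < (f 1 * f (-1)) ^ 4 := by
  set x := Real.exp 1
  have hx : 2 ≤ x := by linarith [Real.add_one_le_exp 1]
  have hx0 : 0 < x := by positivity
  have h1 : f 1 = 2 * x - 1 := by rw [hf]; norm_num; ring
  have hm1 : x * f (-1) = x ^ 2 - x + 1 := by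
    rw [hf]; norm_num [Real.exp_neg]; field_simp; ring
  have hpow (n : ℕ) : Real.exp n = x ^ n := by rw [← Real.exp_nat_mul, mul_one]
  have e2 : Real.exp 2 = x ^ 2 := by exact_mod_cast hpow 2
  have e4 : Real.exp 4 = x ^ 4 := by exact_mod_cast hpow 4
  have h2 : f 2 = x ^ 2 + x ^ 4 - 1 := by
    rw [hf]; norm_num [e2, e4]
  have hm2 : x ^ 2 * f (-2) = x ^ 6 - x ^ 2 + 1 := by
    rw [hf]; norm_num [Real.exp_neg, e2, e4]; field_simp; ring
  refine lt_of_mul_lt_mul_left ?_ (pow_pos hx0 4).le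
  calc x ^ 4 * (f 2 * f (-2)) = x ^ 2 * f 2 * (x ^ 2 * f (-2)) := by ring
    _ = x ^ 2 * (x ^ 2 + x ^ 4 - 1) * (x ^ 6 - x ^ 2 + 1) := by rw [h2, hm2]
    _ < ((2 * x - 1) * (x ^ 2 - x + 1)) ^ 4 := four_point_poly_lt hx
    _ = x ^ 4 * (f 1 * f (-1)) ^ 4 := by rw [← h1, ← hm1]; ring

/-- There are no complex `a, b, c` with `e^z + e^(z^2) - 1 = e^(a z^2 + b z + c)`
for all complex `z`. -/
theorem no_quadratic_exp_representation :
    ¬ ∃ a b c : ℂ, ∀ z : ℂ,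
      Complex.exp z + Complex.exp (z ^ 2) - 1 = Complex.exp (a * z ^ 2 + b * z + c) := by
  rintro ⟨a, b, c, h⟩
  have key := four_point_relation_of_eq_exp_quadratic
    (f := fun z => cexp z + cexp (z ^ 2) - 1) h
  refine (exp_add_exp_sq_four_point_lt
    (f := fun t => Real.exp t + Real.exp (t ^ 2) - 1) fun _ => rfl).ne ?_
  apply ofReal_injective
  simpa using key
end

section
/- Borel–Carathéodory inequality: if $0 \le r < R$ and $\phi_0$ is analytic on the closed disc $|w| \le R$, then $\sup_{|w| \le r} |\phi_0(w)| \le \frac{2r}{R-r} \sup_{|w| \le R} \Re \phi_0(w) + \frac{R+r}{R-r} |\phi_0(0)|$. -/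
open Complex Metric

open Filter Set Topology

/-!
After subtracting `φ₀ 0`, the function vanishes at the origin and its real part is bounded by
`M = A - Re φ₀ 0 ≥ 0`. Composed with `ζ ↦ ζ / (2M - ζ)`, which maps `{Re ζ ≤ M}` into the unit
disc, it satisfies the Schwarz lemma; inverting the map gives `‖φ₀ w - φ₀ 0‖ ≤ 2M‖w‖/(R - ‖w‖)`
(`Complex.borelCaratheodory_zero`, stated there for `M > 0`; `M = 0` is the limit `M' ↓ 0`).
-/

namespace Complex

variable {f : ℂ → ℂ} {M R r : ℝ} {z : ℂ}

theorem borelCaratheodory_zero_of_nonneg (hM : 0 ≤ M) (hf : DifferentiableOn ℂ f (ball 0 R))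
    (hf₁ : MapsTo f (ball 0 R) {z | z.re ≤ M}) (hz : z ∈ ball 0 R) (hf₂ : f 0 = 0) :
    ‖f z‖ ≤ 2 * M * ‖z‖ / (R - ‖z‖) := by
  have hR : 0 < R := pos_of_mem_ball hz
  have hlim : Tendsto (fun M' : ℝ ↦ 2 * M' * ‖z‖ / (R - ‖z‖)) (𝓝[>] M)
      (𝓝 (2 * M * ‖z‖ / (R - ‖z‖))) :=
    (Continuous.tendsto (by fun_prop) M).mono_left nhdsWithin_le_nhds
  refine ge_of_tendsto hlim ?_
  filter_upwards [self_mem_nhdsWithin] with M' hM'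
  exact borelCaratheodory_zero (hM.trans_lt hM') hf
    (hf₁.mono_right fun _ hζ ↦ (show _ ≤ M from hζ).trans hM'.le) hR hz hf₂

theorem norm_sub_apply_zero_le_of_re_le (hf : DifferentiableOn ℂ f (ball 0 R))
    (hf₁ : MapsTo f (ball 0 R) {z | z.re ≤ M}) (hrR : r < R) (hz : z ∈ closedBall 0 r) :
    ‖f z - f 0‖ ≤ 2 * r / (R - r) * (M - (f 0).re) := by
  have hzr : ‖z‖ ≤ r := mem_closedBall_zero_iff.mp hz
  have hzR : z ∈ ball 0 R := mem_ball_zero_iff.mpr (hzr.trans_lt hrR)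
  have hM₀ : 0 ≤ M - (f 0).re := sub_nonneg.mpr (hf₁ (mem_ball_self (pos_of_mem_ball hzR)))
  have hr : 0 ≤ r := (norm_nonneg z).trans hzr
  have hRr : 0 < R - r := sub_pos.mpr hrR
  calc ‖f z - f 0‖ ≤ 2 * (M - (f 0).re) * ‖z‖ / (R - ‖z‖) := by
        refine borelCaratheodory_zero_of_nonneg hM₀ (hf.sub_const _) (fun ζ hζ ↦ ?_) hzR
          (sub_self _)
        simpa using hf₁ hζ
    _ ≤ 2 * (M - (f 0).re) * r / (R - r) := by gcongr
    _ = 2 * r / (R - r) * (M - (f 0).re) := by ring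

end Complex

/-- Borel–Carathéodory inequality: if `0 ≤ r < R` and `φ₀` is analytic on the closed disc
`|w| ≤ R`, then `sup_{|w| ≤ r} |φ₀ w| ≤ (2r/(R-r)) · sup_{|w| ≤ R} Re φ₀ w
+ ((R+r)/(R-r)) · |φ₀ 0|` (formulated with an arbitrary upper bound `A` for the
real part on the large disc). -/
theorem borel_caratheodory (r R : ℝ) (hr : 0 ≤ r) (hrR : r < R) (φ₀ : ℂ → ℂ)
    (hφ₀ : AnalyticOnNhd ℂ φ₀ (closedBall (0 : ℂ) R))
    (A : ℝ) (hA : ∀ w ∈ closedBall (0 : ℂ) R, (φ₀ w).re ≤ A) :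
    ∀ w ∈ closedBall (0 : ℂ) r,
      ‖φ₀ w‖ ≤ 2 * r / (R - r) * A + (R + r) / (R - r) * ‖φ₀ 0‖ := by
  intro w hw
  have hRr : 0 < R - r := sub_pos.mpr hrR
  have hre : ∀ ζ ∈ ball (0 : ℂ) R, (φ₀ ζ).re ≤ A := fun ζ hζ ↦ hA ζ (ball_subset_closedBall hζ)
  calc ‖φ₀ w‖ ≤ ‖φ₀ w - φ₀ 0‖ + ‖φ₀ 0‖ := norm_le_norm_sub_add _ _
    _ ≤ 2 * r / (R - r) * (A - (φ₀ 0).re) + ‖φ₀ 0‖ := by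
        gcongr
        exact norm_sub_apply_zero_le_of_re_le
          (hφ₀.differentiableOn.mono ball_subset_closedBall) hre hrR hw
    _ ≤ 2 * r / (R - r) * (A + ‖φ₀ 0‖) + ‖φ₀ 0‖ := by
        gcongr
        linarith [neg_abs_le (φ₀ 0).re, abs_re_le_norm (φ₀ 0)]
    _ = 2 * r / (R - r) * A + (R + r) / (R - r) * ‖φ₀ 0‖ := by
        field_simp
        ring
end

section
/- Punctured Borel–Carathéodory: let $\phi$ be analytic on a punctured neighbourhood of $0$ in $\mathbf{C}$ on which $\Re\phi(z) \le c/|z|^\kappa$ for some real constants $c, \kappa \ge 0$. Then there is a punctured neighbourhood of $0$ and a real constant $c'$ such that $|\phi(z)| \le c'/|z|^{\kappa+1}$ on it. -/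
/-!
Put `Φ u = φ u⁻¹`; it is holomorphic on `‖u‖ ≥ (2δ)⁻¹` with `Re Φ u ≤ c ‖u‖ ^ κ` there.
Cauchy's formula on annuli splits `Φ = g - F`, where `g`, the Cauchy integral of `Φ` over large
circles, is entire, and `F`, the Cauchy integral over the inner circle, is bounded near `∞`.
So `Re g u ≤ c ‖u‖ ^ κ + M` on all of `ℂ`, and Borel–Carathéodory on the disc of radius `2 ‖u‖`
gives `‖g u‖ = O(‖u‖ ^ κ)`. Hence `‖φ z‖ = O(‖z‖ ^ (-κ))` as `z → 0`.
-/

open Complex Metric Set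

variable {E : Type*} [NormedAddCommGroup E] [NormedSpace ℂ E]

noncomputable def circleCauchyIntegral (f : ℂ → E) (R : ℝ) (w : ℂ) : E :=
  (2 * Real.pi * I : ℂ)⁻¹ • ∮ z in C(0, R), (z - w)⁻¹ • f z

theorem differentiableAt_circleCauchyIntegral [CompleteSpace E] {f : ℂ → E} {R : ℝ} {w : ℂ}
    (hf : CircleIntegrable f 0 R) (hw : ‖w‖ < R) :
    DifferentiableAt ℂ (circleCauchyIntegral f R) w := by
  have hR : 0 < R := (norm_nonneg w).trans_lt hw
  lift R to NNReal using hR.le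
  refine (hasFPowerSeriesOn_cauchy_integral hf (mod_cast hR)).differentiableOn.differentiableAt
    (isOpen_eball.mem_nhds ?_)
  simpa using hw

theorem norm_circleCauchyIntegral_le {f : ℂ → E} {R M : ℝ} {w : ℂ} (hR : 0 < R)
    (hf : ∀ z ∈ sphere (0 : ℂ) R, ‖f z‖ ≤ M) (hw : 2 * R ≤ ‖w‖) :
    ‖circleCauchyIntegral f R w‖ ≤ M := by
  have hbound : ∀ z ∈ sphere (0 : ℂ) R, ‖(z - w)⁻¹ • f z‖ ≤ R⁻¹ * M := by
    intro z hz
    have hzw : R ≤ ‖z - w‖ := by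
      rw [mem_sphere_zero_iff_norm] at hz
      linarith [norm_sub_norm_le w z, norm_sub_rev z w]
    rw [norm_smul, norm_inv]
    exact mul_le_mul (inv_anti₀ hR hzw) (hf z hz) (norm_nonneg _) (inv_nonneg.mpr hR.le)
  calc ‖circleCauchyIntegral f R w‖ ≤ R * (R⁻¹ * M) :=
        circleIntegral.norm_two_pi_i_inv_smul_integral_le_of_norm_le_const hR.le hbound
    _ = M := by field_simp

theorem circleIntegral_dslope [CompleteSpace E] {f : ℂ → E} {R : ℝ} {w : ℂ} (hR : 0 ≤ R)
    (hf : ContinuousOn f (sphere 0 R)) (hw : ‖w‖ ≠ R) :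
    ∮ z in C(0, R), dslope f w z =
      (∮ z in C(0, R), (z - w)⁻¹ • f z) - (∮ z in C(0, R), (z - w)⁻¹) • f w := by
  have hne : ∀ z ∈ sphere (0 : ℂ) R, z - w ≠ 0 := fun z hz h => by
    rw [mem_sphere_zero_iff_norm, sub_eq_zero.mp h] at hz
    exact hw hz
  have hinv : ContinuousOn (fun z : ℂ => (z - w)⁻¹) (sphere 0 R) :=
    (continuousOn_id.sub continuousOn_const).inv₀ hne
  have hint₁ : CircleIntegrable (fun z => (z - w)⁻¹ • f z) 0 R :=
    (hinv.smul hf).circleIntegrable hR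
  have hint₂ : CircleIntegrable (fun z => (z - w)⁻¹ • f w) 0 R :=
    (hinv.smul continuousOn_const).circleIntegrable hR
  rw [← circleIntegral.integral_smul_const, ← circleIntegral.integral_sub hint₁ hint₂]
  refine circleIntegral.integral_congr hR fun z hz => ?_
  rw [dslope_of_ne f (sub_ne_zero.mp (hne z hz)), slope_def_module, smul_sub]

theorem circleIntegral_sub_inv_eq_zero_of_lt_norm {R : ℝ} {w : ℂ} (hR : 0 ≤ R) (hw : R < ‖w‖) :
    ∮ z in C(0, R), (z - w)⁻¹ = 0 := by
  have hd : ∀ z ∈ closedBall (0 : ℂ) R, DifferentiableAt ℂ (fun z : ℂ => (z - w)⁻¹) z := by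
    intro z hz
    refine (differentiableAt_id.sub_const w).inv (sub_ne_zero.mpr ?_)
    rintro rfl
    exact (mem_closedBall_zero_iff.mp hz).not_gt hw
  exact circleIntegral_eq_zero_of_differentiable_on_off_countable hR countable_empty
    (fun z hz => (hd z hz).continuousAt.continuousWithinAt)
    (fun z hz => hd z (ball_subset_closedBall hz.1))

section Exterior

variable {f : ℂ → E} {r : ℝ}

theorem continuousOn_sphere_of_differentiableAt (hf : ∀ z, r ≤ ‖z‖ → DifferentiableAt ℂ f z)
    {R : ℝ} (hR : r ≤ R) : ContinuousOn f (sphere 0 R) := fun z hz =>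
  (hf z (by rwa [mem_sphere_zero_iff_norm.mp hz])).continuousAt.continuousWithinAt

theorem circleCauchyIntegral_eq_of_le (hr : 0 < r) (hf : ∀ z, r ≤ ‖z‖ → DifferentiableAt ℂ f z)
    {ρ ρ' : ℝ} {w : ℂ} (hρ : r ≤ ρ) (hρρ' : ρ ≤ ρ') (hw : ‖w‖ < ρ) :
    circleCauchyIntegral f ρ w = circleCauchyIntegral f ρ' w := by
  have hd : ∀ z, ρ ≤ ‖z‖ → DifferentiableAt ℂ (fun z => (z - w)⁻¹ • f z) z := by
    intro z hz
    refine ((differentiableAt_id.sub_const w).inv (sub_ne_zero.mpr ?_)).smul (hf z (hρ.trans hz))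
    rintro rfl
    exact hz.not_gt hw
  unfold circleCauchyIntegral
  rw [circleIntegral_eq_of_differentiable_on_annulus_off_countable (hr.trans_le hρ) hρρ'
    countable_empty (fun z hz => (hd z ?_).continuousAt.continuousWithinAt)
    (fun z hz => hd z ?_)]
  · simpa using hz.2
  · exact (by simpa using hz.1.2 : ρ < ‖z‖).le

theorem exists_differentiable_eq_circleCauchyIntegral [CompleteSpace E] (hr : 0 < r)
    (hf : ∀ z, r ≤ ‖z‖ → DifferentiableAt ℂ f z) :
    ∃ g : ℂ → E, Differentiable ℂ g ∧
      ∀ ρ w, r ≤ ρ → ‖w‖ < ρ → g w = circleCauchyIntegral f ρ w := by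
  have heq : ∀ ρ ρ' w, r ≤ ρ → r ≤ ρ' → ‖w‖ < ρ → ‖w‖ < ρ' →
      circleCauchyIntegral f ρ w = circleCauchyIntegral f ρ' w := by
    intro ρ ρ' w hρ hρ' hw hw'
    rcases le_total ρ ρ' with h | h
    · exact circleCauchyIntegral_eq_of_le hr hf hρ h hw
    · exact (circleCauchyIntegral_eq_of_le hr hf hρ' h hw').symm
  have hint : ∀ ρ, r ≤ ρ → CircleIntegrable f 0 ρ := fun ρ hρ =>
    (continuousOn_sphere_of_differentiableAt hf hρ).circleIntegrable (hr.le.trans hρ)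
  refine ⟨fun w => circleCauchyIntegral f (‖w‖ + r) w, fun w₀ => ?_,
    fun ρ w hρ hw => heq _ _ _ (by linarith [norm_nonneg w]) hρ (by linarith) hw⟩
  have hw₀ : ‖w₀‖ < ‖w₀‖ + r := by linarith
  refine (differentiableAt_circleCauchyIntegral (hint _ (by linarith [norm_nonneg w₀])) hw₀)
    |>.congr_of_eventuallyEq ?_
  filter_upwards [isOpen_ball.mem_nhds (mem_ball_zero_iff.mpr hw₀)] with w hw
  exact heq _ _ _ (by linarith [norm_nonneg w]) (by linarith [norm_nonneg w₀]) (by linarith)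
    (mem_ball_zero_iff.mp hw)

theorem eq_circleCauchyIntegral_sub_circleCauchyIntegral [CompleteSpace E] (hr : 0 < r)
    (hf : ∀ z, r ≤ ‖z‖ → DifferentiableAt ℂ f z) {ρ : ℝ} {w : ℂ} (hw : r < ‖w‖) (hwρ : ‖w‖ < ρ) :
    f w = circleCauchyIntegral f ρ w - circleCauchyIntegral f r w := by
  -- Cauchy's theorem on the annulus, applied to `dslope f w`, which is holomorphic across `w`.
  have hslope : ∀ z, r ≤ ‖z‖ → ContinuousAt (dslope f w) z := by
    intro z hz
    rcases eq_or_ne z w with rfl | hne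
    · exact continuousAt_dslope_same.mpr (hf z hz)
    · exact (continuousAt_dslope_of_ne hne).mpr (hf z hz).continuousAt
  have hannulus : ∮ z in C(0, ρ), dslope f w z = ∮ z in C(0, r), dslope f w z := by
    refine circleIntegral_eq_of_differentiable_on_annulus_off_countable hr (by linarith)
      (countable_singleton w) (fun z hz => (hslope z ?_).continuousWithinAt) fun z hz => ?_
    · simpa using hz.2
    · exact (differentiableAt_dslope_of_ne hz.2).mpr (hf z (by simpa using hz.1.2 : r < ‖z‖).le)
  rw [circleIntegral_dslope (by linarith)
      (continuousOn_sphere_of_differentiableAt hf (by linarith)) hwρ.ne,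
    circleIntegral_dslope hr.le (continuousOn_sphere_of_differentiableAt hf le_rfl) hw.ne',
    circleIntegral.integral_sub_inv_of_mem_ball (mem_ball_zero_iff.mpr hwρ),
    circleIntegral_sub_inv_eq_zero_of_lt_norm hr.le hw, zero_smul, sub_zero] at hannulus
  unfold circleCauchyIntegral
  rw [← smul_sub, eq_inv_smul_iff₀ (by simp [Real.pi_ne_zero, I_ne_zero]), ← hannulus,
    sub_sub_cancel]

theorem exists_differentiable_norm_sub_le [CompleteSpace E] (hr : 0 < r)
    (hf : ∀ z, r ≤ ‖z‖ → DifferentiableAt ℂ f z) :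
    ∃ g : ℂ → E, Differentiable ℂ g ∧ ∃ M, ∀ w, 2 * r ≤ ‖w‖ → ‖f w - g w‖ ≤ M := by
  obtain ⟨g, hg, hgf⟩ := exists_differentiable_eq_circleCauchyIntegral hr hf
  obtain ⟨M, hM⟩ := (isCompact_sphere (0 : ℂ) r).exists_bound_of_continuousOn
    (continuousOn_sphere_of_differentiableAt hf le_rfl)
  refine ⟨g, hg, M, fun w hw => ?_⟩
  have hρ : ‖w‖ < ‖w‖ + r := by linarith
  rw [eq_circleCauchyIntegral_sub_circleCauchyIntegral hr hf (by linarith) hρ,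
    hgf _ w (by linarith [norm_nonneg w]) hρ, sub_sub_cancel_left, norm_neg]
  exact norm_circleCauchyIntegral_le hr hM hw

end Exterior

theorem Differentiable.exists_norm_le_mul_rpow_of_re_le {g : ℂ → ℂ} (hg : Differentiable ℂ g)
    {c κ M : ℝ} (hc : 0 ≤ c) (hκ : 0 ≤ κ) (hre : ∀ z, (g z).re ≤ c * ‖z‖ ^ κ + M) :
    ∃ C, ∀ z, 1 ≤ ‖z‖ → ‖g z‖ ≤ C * ‖z‖ ^ κ := by
  refine ⟨2 * c * 2 ^ κ + 2 * (|M| + 1) + 3 * ‖g 0‖, fun z hz => ?_⟩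
  have hz₀ : 0 < ‖z‖ := one_pos.trans_le hz
  have hmaps : MapsTo g (ball 0 (2 * ‖z‖)) {w | w.re ≤ c * 2 ^ κ * ‖z‖ ^ κ + (|M| + 1)} := by
    intro w hw
    have hw' : ‖w‖ ^ κ ≤ 2 ^ κ * ‖z‖ ^ κ := by
      rw [← Real.mul_rpow zero_le_two (norm_nonneg z)]
      exact Real.rpow_le_rpow (norm_nonneg w) (mem_ball_zero_iff.mp hw).le hκ
    have := mul_le_mul_of_nonneg_left hw' hc
    show (g w).re ≤ _
    linarith [hre w, le_abs_self M]
  have hBC := borelCaratheodory (by positivity) hg.differentiableOn hmaps (by positivity)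
    (mem_ball_zero_iff.mpr (by linarith))
  rw [show 2 * ‖z‖ - ‖z‖ = ‖z‖ by ring, mul_div_assoc, div_self hz₀.ne', mul_div_assoc,
    show (2 * ‖z‖ + ‖z‖) / ‖z‖ = 3 by field_simp; ring] at hBC
  have h1 : 1 ≤ ‖z‖ ^ κ := Real.one_le_rpow hz hκ
  nlinarith [norm_nonneg (g 0), abs_nonneg M]

theorem exists_norm_le_mul_rpow_of_re_le {f : ℂ → ℂ} {r c κ : ℝ} (hr : 0 < r)
    (hf : ∀ z, r ≤ ‖z‖ → DifferentiableAt ℂ f z) (hc : 0 ≤ c) (hκ : 0 ≤ κ)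
    (hre : ∀ z, r ≤ ‖z‖ → (f z).re ≤ c * ‖z‖ ^ κ) :
    ∃ R C, ∀ z, R ≤ ‖z‖ → ‖f z‖ ≤ C * ‖z‖ ^ κ := by
  obtain ⟨g, hg, M, hM⟩ := exists_differentiable_norm_sub_le hr hf
  obtain ⟨M', hM'⟩ := (isCompact_closedBall (0 : ℂ) (2 * r)).exists_bound_of_continuousOn
    hg.continuous.continuousOn
  have hgre : ∀ z, (g z).re ≤ c * ‖z‖ ^ κ + max M M' := by
    intro z
    have hcz : 0 ≤ c * ‖z‖ ^ κ := by positivity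
    rcases le_or_gt ‖z‖ (2 * r) with hz | hz
    · have := hM' z (mem_closedBall_zero_iff.mpr hz)
      linarith [re_le_norm (g z), le_max_right M M']
    · have hgf : (g z).re - (f z).re ≤ ‖f z - g z‖ := by
        simpa only [sub_re, norm_sub_rev] using re_le_norm (g z - f z)
      linarith [hre z (by linarith), hM z hz.le, le_max_left M M']
  obtain ⟨C, hC⟩ := hg.exists_norm_le_mul_rpow_of_re_le hc hκ hgre
  refine ⟨max 1 (2 * r), C + |M|, fun z hz => ?_⟩
  have h1 : 1 ≤ ‖z‖ ^ κ := Real.one_le_rpow (le_of_max_le_left hz) hκ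
  calc ‖f z‖ ≤ ‖g z‖ + ‖f z - g z‖ := norm_le_norm_add_norm_sub' (f z) (g z)
    _ ≤ C * ‖z‖ ^ κ + |M| * ‖z‖ ^ κ := by
      gcongr
      · exact hC z (le_of_max_le_left hz)
      · exact (hM z (le_of_max_le_right hz)).trans
          ((le_abs_self M).trans (le_mul_of_one_le_right (abs_nonneg M) h1))
    _ = (C + |M|) * ‖z‖ ^ κ := by ring

/-- Punctured Borel–Carathéodory: if `φ` is analytic on a punctured neighbourhood
`0 < |z| ≤ 2δ` of `0` on which `Re φ z ≤ c / |z|^κ` for reals `c, κ ≥ 0`, then on some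
punctured neighbourhood of `0` we have `|φ z| ≤ c' / |z|^(κ+1)` for some real `c'`. -/
theorem punctured_borel_caratheodory (c κ : ℝ) (hc : 0 ≤ c) (hκ : 0 ≤ κ)
    (δ : ℝ) (hδ : 0 < δ) (φ : ℂ → ℂ)
    (hφ : AnalyticOnNhd ℂ φ {z : ℂ | 0 < ‖z‖ ∧ ‖z‖ ≤ 2 * δ})
    (hre : ∀ z : ℂ, 0 < ‖z‖ → ‖z‖ ≤ 2 * δ → (φ z).re ≤ c / ‖z‖ ^ κ) :
    ∃ δ' c' : ℝ, 0 < δ' ∧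
      ∀ z : ℂ, 0 < ‖z‖ → ‖z‖ ≤ δ' → ‖φ z‖ ≤ c' / ‖z‖ ^ (κ + 1) := by
  have hinv : ∀ u : ℂ, (2 * δ)⁻¹ ≤ ‖u‖ → 0 < ‖u⁻¹‖ ∧ ‖u⁻¹‖ ≤ 2 * δ := fun u hu => by
    have hu₀ : 0 < ‖u‖ := (by positivity : 0 < (2 * δ)⁻¹).trans_le hu
    rw [norm_inv]
    exact ⟨inv_pos.mpr hu₀, inv_le_of_inv_le₀ (by positivity) hu⟩
  have hdiff : ∀ u : ℂ, (2 * δ)⁻¹ ≤ ‖u‖ → DifferentiableAt ℂ (fun u => φ u⁻¹) u := fun u hu =>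
    (hφ _ (hinv u hu)).differentiableAt.comp u
      (differentiableAt_inv (norm_pos_iff.mp ((by positivity : 0 < (2 * δ)⁻¹).trans_le hu)))
  have hre' : ∀ u : ℂ, (2 * δ)⁻¹ ≤ ‖u‖ → (φ u⁻¹).re ≤ c * ‖u‖ ^ κ := fun u hu => by
    simpa [norm_inv, Real.inv_rpow (norm_nonneg u), div_eq_mul_inv] using
      hre _ (hinv u hu).1 (hinv u hu).2
  obtain ⟨R, C, hC⟩ := exists_norm_le_mul_rpow_of_re_le (by positivity) hdiff hc hκ hre'
  refine ⟨(max R 1)⁻¹, |C|, by positivity, fun z hz₀ hz => ?_⟩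
  have hzinv : max R 1 ≤ ‖z⁻¹‖ := by
    rw [norm_inv]; exact le_inv_of_le_inv₀ hz₀ hz
  have hz1 : ‖z‖ ≤ 1 := hz.trans (inv_le_one_of_one_le₀ (le_max_right R 1))
  calc ‖φ z‖ = ‖φ z⁻¹⁻¹‖ := by rw [inv_inv]
    _ ≤ C * ‖z⁻¹‖ ^ κ := hC _ (le_of_max_le_left hzinv)
    _ ≤ |C| / ‖z‖ ^ κ := by
      rw [norm_inv, Real.inv_rpow (norm_nonneg z), ← div_eq_mul_inv]
      gcongr
      exact le_abs_self C
    _ ≤ |C| / ‖z‖ ^ (κ + 1) := div_le_div_of_nonneg_left (abs_nonneg C) (by positivity)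
      (Real.rpow_le_rpow_of_exponent_ge hz₀ hz1 (by linarith))
end

section
/- Ax–Hermite–Lindemann: let $K$ be a differential field of characteristic zero with derivation $D$ and constant field $C$. Let $\xi \in K$ and $\hat\xi \in K$, $\hat\xi \neq 0$, satisfy $D\xi = D\hat\xi / \hat\xi$, and suppose $\xi \notin C$. Then $\xi$ and $\hat\xi$ are algebraically independent over $C$. -/
/-!
Rescale the derivation by `1 / Dξ`, so that `ξ′ = 1` and `ξ̂′ = ξ̂`. A nonconstant element is
transcendental over the constants, so `C(ξ)` is a rational function field on which `′` is `d/dξ`.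
If `ξ̂` were algebraic over `C(ξ)` with minimal polynomial `m` of degree `n`, differentiating
`m(ξ̂) = 0` and subtracting `n · m(ξ̂) = 0` leaves a polynomial of degree `< n` vanishing at `ξ̂`;
hence it is zero, and its constant term says that `a = m(0) ≠ 0` satisfies `a′ = n a`.
Writing `a = p(ξ) / q(ξ)`, this becomes the polynomial identity `W(q, p) = n p q`, which is
impossible because the Wronskian has degree `< deg p + deg q`.
-/

open Polynomial IntermediateField Differential

def Derivation.ofLeibniz {R A : Type*} [CommRing R] [CommRing A] [Algebra R A] (D : A → A)
    (hadd : ∀ x y, D (x + y) = D x + D y) (hmul : ∀ x y, D (x * y) = x * D y + D x * y)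
    (halgebraMap : ∀ r, D (algebraMap R A r) = 0) : Derivation R A A :=
  Derivation.mk'
    { toFun := D
      map_add' := hadd
      map_smul' r x := by simp [Algebra.smul_def, hmul, halgebraMap] }
    (fun a b => by simp only [LinearMap.coe_mk, AddHom.coe_mk, smul_eq_mul, hmul]; ring)

theorem transcendental_of_derivation_ne_zero {F E : Type*} [Field F] [CharZero F] [Field E]
    [Algebra F E] (d : Derivation F E E) {x : E} (hx : d x ≠ 0) : Transcendental F x := by
  intro halg
  have hsep : IsSeparable F x := (minpoly.irreducible halg.isIntegral).separable
  have h := d.map_aeval (minpoly F x) x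
  rw [minpoly.aeval, d.map_zero, smul_eq_mul, eq_comm, mul_eq_zero] at h
  exact h.elim (hsep.aeval_derivative_ne_zero (minpoly.aeval F x)) hx

theorem Derivation.apply_mem_adjoin {F E : Type*} [Field F] [Field E] [Algebra F E]
    (d : Derivation F E E) {S : Set E} (hS : ∀ s ∈ S, d s ∈ adjoin F S) {a : E}
    (ha : a ∈ adjoin F S) : d a ∈ adjoin F S := by
  induction ha using adjoin_induction with
  | mem x hx => exact hS x hx
  | algebraMap c => simp
  | add x y _ _ hx hy => simpa using add_mem hx hy
  | inv x hx hdx =>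
    rw [d.leibniz_inv, smul_eq_mul]
    exact mul_mem (neg_mem (pow_mem (inv_mem hx) 2)) hdx
  | mul x y hx hy hdx hdy =>
    rw [d.leibniz, smul_eq_mul, smul_eq_mul]
    exact add_mem (mul_mem hx hdy) (mul_mem hy hdx)

theorem Polynomial.wronskian_ne_natCast_mul {R : Type*} [CommRing R] [IsDomain R] [CharZero R]
    {p q : R[X]} (hp : p ≠ 0) (hq : q ≠ 0) {n : ℕ} (hn : n ≠ 0) :
    wronskian p q ≠ n * (p * q) := by
  intro h
  have hlt := degree_wronskian_lt_add hp hq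
  rw [h, ← C_eq_natCast, degree_C_mul (Nat.cast_ne_zero.mpr hn), degree_mul] at hlt
  exact hlt.false

theorem Derivation.eq_zero_of_mem_adjoin_of_apply_eq_natCast_mul {C K : Type*} [Field C]
    [CharZero C] [Field K] [Algebra C K] (d : Derivation C K K) {x : K} (hx : d x = 1) {a : K}
    (ha : a ∈ C⟮x⟯) {n : ℕ} (hn : n ≠ 0) (hda : d a = n * a) : a = 0 := by
  obtain ⟨p, q, rfl⟩ := (mem_adjoin_simple_iff C a).mp ha
  by_cases hqx : aeval x q = 0
  · simp [hqx]
  have hq : q ≠ 0 := by rintro rfl; simp at hqx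
  suffices p = 0 by simp [this]
  by_contra hp
  have hinj := transcendental_iff_injective.mp
    (transcendental_of_derivation_ne_zero d (x := x) (by simp [hx]))
  refine wronskian_ne_natCast_mul hq hp hn (hinj ?_)
  rw [d.leibniz_div, d.map_aeval, d.map_aeval, hx] at hda
  simp only [smul_eq_mul, mul_one] at hda
  field_simp at hda
  simp only [wronskian, map_mul, map_sub, aeval_natCast]
  linear_combination hda

abbrev IntermediateField.differentialOfDerivMem {C K : Type*} [Field C] [Field K] [Algebra C K]
    [Differential K] (F : IntermediateField C K) (hF : ∀ a ∈ F, a′ ∈ F) : Differential F where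
  deriv := Derivation.mk'
    { toFun a := ⟨a.1′, hF a a.2⟩
      map_add' a b := by ext; simp
      map_smul' n a := by ext; simp }
    (fun a b => by ext; simp [add_comm])

theorem IntermediateField.differentialAlgebraOfDerivMem {C K : Type*} [Field C] [Field K]
    [Algebra C K] [Differential K] (F : IntermediateField C K) (hF : ∀ a ∈ F, a′ ∈ F) :
    letI := F.differentialOfDerivMem hF
    DifferentialAlgebra F K :=
  letI := F.differentialOfDerivMem hF
  ⟨fun _ => rfl⟩

section
variable {F K : Type*} [Field F] [Field K] [Differential F] [Differential K] [Algebra F K]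
  [DifferentialAlgebra F K]

theorem exists_ne_zero_deriv_eq_natDegree_mul_of_deriv_eq_self {y : K} (hy0 : y ≠ 0)
    (hy : y′ = y) (hint : IsIntegral F y) :
    ∃ a : F, a ≠ 0 ∧ a′ = (minpoly F y).natDegree * a := by
  set m := minpoly F y
  set n := m.natDegree
  set P := mapCoeffs m + X * derivative m - n • m
  have hcoeff : ∀ i, P.coeff i = (m.coeff i)′ + ((i : F) - n) * m.coeff i := by
    rintro (_ | i)
    · simp [P, sub_eq_add_neg]
    · simp [P, coeff_derivative]
      ring
  have hP : aeval y P = 0 := by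
    have h := deriv_aeval_eq y m
    rw [minpoly.aeval, hy, map_zero] at h
    simp only [P, map_sub, map_add, map_mul, map_nsmul, aeval_X, minpoly.aeval, m]
    linear_combination -h
  -- The leading coefficients of `X * m'` and `n • m` cancel, and `m` is monic.
  have hdeg : P.degree < m.degree := by
    rw [degree_eq_natDegree (minpoly.ne_zero hint), degree_lt_iff_coeff_zero]
    intro i (hi : n ≤ i)
    obtain rfl | hlt := hi.eq_or_lt
    · have hm : m.coeff n = 1 := (minpoly.monic hint).coeff_natDegree
      simp [hcoeff, hm]
    · simp [hcoeff, coeff_eq_zero_of_natDegree_lt hlt]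
  have hP0 : P = 0 := by
    by_contra hne
    exact (minpoly.degree_le_of_ne_zero F y hne hP).not_gt hdeg
  refine ⟨m.coeff 0, minpoly.coeff_zero_ne_zero hint hy0, ?_⟩
  have h0 := hcoeff 0
  rw [hP0, coeff_zero] at h0
  linear_combination -h0

end

open scoped algebraAdjoinAdjoin in
theorem algebraicIndependent_pair_iff {F E : Type*} [Field F] [Field E] [Algebra F E] {x y : E} :
    AlgebraicIndependent F ![x, y] ↔ Transcendental F x ∧ Transcendental F⟮x⟯ y := by
  have himage : ![x, y] '' {1}ᶜ = {x} := by
    ext z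
    simp [eq_comm]
  let : Unique {j : Fin 2 // j ≠ 1} :=
    ⟨⟨⟨0, by decide⟩⟩, fun ⟨j, hj⟩ => Subtype.ext (show j = 0 by omega)⟩
  rw [AlgebraicIndependent.iff_transcendental_adjoin_image (i := 1), himage,
    algebraicIndependent_unique_type_iff, transcendental_adjoin_iff]
  rfl

/-- Ax–Hermite–Lindemann: in a differential field `K` of characteristic zero with
derivation `D` and constant subfield `C`, if `ξ, ξ̂ ∈ K` with `ξ̂ ≠ 0`,
`D ξ = D ξ̂ / ξ̂` and `ξ ∉ C`, then `ξ` and `ξ̂` are algebraically independent over `C`. -/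
theorem ax_hermite_lindemann (K : Type*) [Field K] [CharZero K] (D : K → K)
    (hadd : ∀ x y : K, D (x + y) = D x + D y)
    (hmul : ∀ x y : K, D (x * y) = x * D y + D x * y)
    (C : Subfield K) (hC : ∀ x : K, x ∈ C ↔ D x = 0)
    (ξ ξh : K) (hξh : ξh ≠ 0) (hD : D ξ = D ξh / ξh) (hξ : ξ ∉ C) :
    AlgebraicIndependent C ![ξ, ξh] := by
  let d : Derivation C K K := .ofLeibniz D hadd hmul fun c => (hC c).1 c.2
  have hdξ : d ξ ≠ 0 := fun h => hξ ((hC ξ).2 h)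
  let δ := (d ξ)⁻¹ • d
  have hδξ : δ ξ = 1 := inv_mul_cancel₀ hdξ
  have hδξh : δ ξh = ξh := by
    have h : D ξh = ξh * d ξ := by rw [show d ξ = D ξ from rfl, hD, mul_div_cancel₀ _ hξh]
    change (d ξ)⁻¹ * D ξh = ξh
    rw [h, mul_left_comm, inv_mul_cancel₀ hdξ, mul_one]
  rw [algebraicIndependent_pair_iff]
  refine ⟨transcendental_of_derivation_ne_zero δ (by simp [hδξ]), fun halg => ?_⟩
  let : Differential K := ⟨δ.restrictScalars ℤ⟩
  have hF : ∀ a ∈ C⟮ξ⟯, a′ ∈ C⟮ξ⟯ := fun a ha => δ.apply_mem_adjoin (by simp [hδξ]) ha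
  let := C⟮ξ⟯.differentialOfDerivMem hF
  have := C⟮ξ⟯.differentialAlgebraOfDerivMem hF
  obtain ⟨a, ha0, ha⟩ :=
    exists_ne_zero_deriv_eq_natDegree_mul_of_deriv_eq_self hξh hδξh halg.isIntegral
  exact ha0 (Subtype.ext (δ.eq_zero_of_mem_adjoin_of_apply_eq_natCast_mul hδξ a.2
    (minpoly.natDegree_pos halg.isIntegral).ne' (congrArg Subtype.val ha)))
end

section
/- The Zariski closure of the set $\{(z, 1-z, e^z, e^{1-z}) : z \in \mathbf{C}\}$ in $\mathbf{C}^2 \times \mathbf{C}^{*2}$ is the surface defined by $X_1 + X_2 = 1$ and $\hat X_1 \hat X_2 = e$; equivalently, every polynomial $G(X_1, X_2, \hat X_1, \hat X_2)$ vanishing at $(z, 1-z, e^z, e^{1-z})$ for all $z \in \mathbf{C}$ lies in the ideal generated by $X_1 + X_2 - 1$ and $\hat X_1 \hat X_2 - e$. -/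
/-!
Modulo the ideal, `X₁ = 1 - X₀` and `X₃ = e X₂⁻¹`, so some power of `X₂` times `G` is congruent
to a polynomial `P(X₀, X₂)`. Evaluating on the curve gives `P(z, e^z) = 0` for all `z`, hence
`P = 0` by the algebraic independence of `z` and `e^z`; as `X₂` is a unit modulo the ideal,
`G` lies in it.
-/

open MvPolynomial

theorem Ideal.mem_of_pow_mul_mem_of_mul_sub_mem {R : Type*} [CommRing R] {I : Ideal R}
    {x y c g : R} {n : ℕ} (hc : IsUnit c) (hxy : x * y - c ∈ I) (hg : x ^ n * g ∈ I) :
    g ∈ I := by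
  rw [← Ideal.Quotient.eq_zero_iff_mem] at hg ⊢
  have hx : IsUnit (Ideal.Quotient.mk I x) := by
    refine isUnit_of_mul_isUnit_left (y := Ideal.Quotient.mk I y) ?_
    rw [← map_mul, Ideal.Quotient.eq.2 hxy]
    exact hc.map _
  rw [map_mul, map_pow] at hg
  exact (hx.pow n).mul_right_eq_zero.1 hg

theorem MvPolynomial.eval_cons_eq_zero_of_infinite {R : Type*} [CommRing R] [IsDomain R]
    {n : ℕ} {P : MvPolynomial (Fin (n + 1)) R} {y : Fin n → R}
    (h : {t | eval (Fin.cons t y) P = 0}.Infinite) (t : R) : eval (Fin.cons t y) P = 0 := by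
  simp only [eval_eq_eval_mv_eval'] at h ⊢
  rw [Polynomial.eq_zero_of_infinite_isRoot _ h, Polynomial.eval_zero]

theorem Complex.infinite_setOf_exp_eq {w : ℂ} (hw : w ≠ 0) : {z | exp z = w}.Infinite := by
  refine Set.infinite_of_injective_forall_mem
    (f := fun n : ℤ ↦ log w + n * (2 * Real.pi * I)) (fun m n hmn ↦ ?_) fun n ↦ ?_
  · have h2πI : (2 * Real.pi * I : ℂ) ≠ 0 := by simp [Real.pi_ne_zero, I_ne_zero]
    exact_mod_cast mul_right_cancel₀ h2πI (add_left_cancel hmn)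
  · simp [exp_add, exp_log hw, exp_int_mul_two_pi_mul_I]

theorem aeval_id_exp_apply (P : MvPolynomial (Fin 2) ℂ) (z : ℂ) :
    aeval ![(id : ℂ → ℂ), Complex.exp] P z = eval ![z, Complex.exp z] P := by
  have hpt : (fun i ↦ Pi.evalAlgHom ℂ (fun _ : ℂ ↦ ℂ) z (![id, Complex.exp] i)) =
      ![z, Complex.exp z] := by
    funext i; fin_cases i <;> rfl
  change Pi.evalAlgHom ℂ (fun _ : ℂ ↦ ℂ) z (aeval _ P) = _
  rw [← AlgHom.comp_apply, comp_aeval, hpt]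
  rfl

theorem algebraicIndependent_id_exp :
    AlgebraicIndependent ℂ ![(id : ℂ → ℂ), Complex.exp] := by
  refine algebraicIndependent_iff.2 fun P hP ↦ ?_
  have hP_exp (z : ℂ) : eval ![z, Complex.exp z] P = 0 := by
    rw [← aeval_id_exp_apply, hP, Pi.zero_apply]
  -- `P(·, w)` vanishes at every logarithm of `w`, so `P` vanishes on `ℂ × ℂˣ`.
  refine funext_set ![Set.univ, {0}ᶜ] (fun i ↦ ?_) fun x hx ↦ ?_
  · fin_cases i
    exacts [Set.infinite_univ, (Set.finite_singleton 0).infinite_compl]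
  rw [map_zero, ← Fin.cons_self_tail x]
  refine eval_cons_eq_zero_of_infinite ((Complex.infinite_setOf_exp_eq (hx 1 trivial)).mono ?_) _
  intro t ht
  have hpt : Fin.cons t (Fin.tail x) = ![t, Complex.exp t] := by
    funext i; fin_cases i
    · rfl
    · exact ht.symm
  show eval _ P = 0
  rw [hpt]
  exact hP_exp t

noncomputable def expLineIdeal : Ideal (MvPolynomial (Fin 4) ℂ) :=
  Ideal.span {X 0 + X 1 - C 1, X 2 * X 3 - C (Complex.exp 1)}

theorem expLineIdeal_le_ker_eval (z : ℂ) :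
    expLineIdeal ≤ RingHom.ker (eval ![z, 1 - z, Complex.exp z, Complex.exp (1 - z)]) := by
  rw [expLineIdeal, Ideal.span_le]
  rintro g (rfl | rfl)
  · simp [RingHom.mem_ker]
  · simp [RingHom.mem_ker, ← Complex.exp_add]

theorem exists_pow_mul_sub_rename_mem_expLineIdeal (G : MvPolynomial (Fin 4) ℂ) :
    ∃ (n : ℕ) (P : MvPolynomial (Fin 2) ℂ), X 2 ^ n * G - rename ![0, 2] P ∈ expLineIdeal := by
  set π := Ideal.Quotient.mkₐ ℂ expLineIdeal
  set A := (π.comp (rename ![0, 2])).range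
  have hX0 : π (X 0) ∈ A := ⟨X 0, by simp⟩
  have hX2 : π (X 2) ∈ A := ⟨X 1, by simp⟩
  set T := A.saturation (Submonoid.powers (π (X 2))) (Submonoid.powers_le.2 hX2)
  have hsum : π (X 0 + X 1) = π (C 1) := Ideal.Quotient.eq.2 (Ideal.subset_span (by simp))
  have hprod : π (X 2 * X 3) = π (C (Complex.exp 1)) :=
    Ideal.Quotient.eq.2 (Ideal.subset_span (by simp))
  have hX1 : π (X 1) ∈ A := by
    rw [map_add, C_1, map_one] at hsum
    rw [show π (X 1) = 1 - π (X 0) by linear_combination hsum]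
    exact A.sub_mem A.one_mem hX0
  have hX3 : π (X 3) ∈ T := by
    refine A.mem_saturation_of_mul_mem_left ?_ (Submonoid.mem_powers _)
    rw [← map_mul, hprod, algHom_C]
    exact T.algebraMap_mem _
  have hX (i : Fin 4) : π (X i) ∈ T := by
    fin_cases i
    exacts [A.le_saturation hX0, A.le_saturation hX1, A.le_saturation hX2, hX3]
  have hT : T.comap π = ⊤ := by
    rw [eq_top_iff, ← adjoin_range_X, Algebra.adjoin_le_iff]
    rintro _ ⟨i, rfl⟩
    exact hX i
  have hG : G ∈ T.comap π := hT ▸ Algebra.mem_top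
  obtain ⟨_, ⟨n, rfl⟩, P, hP⟩ := hG
  refine ⟨n, P, Ideal.Quotient.eq.1 ?_⟩
  simpa [π] using hP.symm

/-- Every polynomial `G(X₁, X₂, X̂₁, X̂₂)` vanishing at `(z, 1-z, e^z, e^(1-z))` for all
`z ∈ ℂ` lies in the ideal generated by `X₁ + X₂ - 1` and `X̂₁ X̂₂ - e`; i.e. the Zariski
closure of `{(z, 1-z, e^z, e^(1-z)) : z ∈ ℂ}` is the surface `X₁ + X₂ = 1`, `X̂₁ X̂₂ = e`. -/
theorem zariski_closure_of_exp_line (G : MvPolynomial (Fin 4) ℂ)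
    (hG : ∀ z : ℂ, MvPolynomial.eval
      ![z, 1 - z, Complex.exp z, Complex.exp (1 - z)] G = 0) :
    G ∈ Ideal.span ({X 0 + X 1 - C 1,
      X 2 * X 3 - C (Complex.exp 1)} : Set (MvPolynomial (Fin 4) ℂ)) := by
  obtain ⟨n, P, hnP⟩ := exists_pow_mul_sub_rename_mem_expLineIdeal G
  have hP : P = 0 := by
    refine algebraicIndependent_iff.1 algebraicIndependent_id_exp P (funext fun z ↦ ?_)
    have hz := expLineIdeal_le_ker_eval z hnP
    have hpt : ![z, 1 - z, Complex.exp z, Complex.exp (1 - z)] ∘ ![0, 2] = ![z, Complex.exp z] := by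
      funext i; fin_cases i <;> rfl
    simpa [RingHom.mem_ker, eval_rename, hG z, hpt, aeval_id_exp_apply] using hz
  rw [hP, map_zero, sub_zero] at hnP
  exact Ideal.mem_of_pow_mul_mem_of_mul_sub_mem (y := X 3)
    ((isUnit_iff_ne_zero.2 (Complex.exp_ne_zero 1)).map C) (Ideal.subset_span (by simp)) hnP
end

section
/- Suppose $\Phi$ and $\phi$ are analytic functions on $\{z : 0 < |z|\}$ with $e^z + e^{1/z} - 1 = \Phi(z)$ and $\Phi(z) = z^m e^{\phi(z)}$ for some integer $m$, where $\Phi$ never vanishes. Then $\phi$ cannot be of the form $\phi(z) = a z^2 + b z + c + d/z + e'/z^2$ for complex constants $a, b, c, d, e'$. -/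
/-!
Take `log ‖·‖` of the factorization along the positive real axis: for `x > 0` it reads
`log (eˣ + e^{1/x} - 1) = m log x + A x² + B x + C + D/x + E/x²` with `A = Re a`, etc.
As `x → ∞` the left side is `x + o(1)`, which forces `A = 0`, `B = 1`, `m = 0`, `C = 0`;
the left side is invariant under `x ↦ 1/x`, so likewise `E = 0`, `D = 1`.
At `x = 1` this gives `log (2e - 1) = 2`, i.e. `(e - 1)² = 0`, which is false.
-/

open Complex Filter Topology Asymptotics

def quadLaurent {K : Type*} [Field K] (a b c d e z : K) : K :=
  a * z ^ 2 + b * z + c + d / z + e / z ^ 2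

lemma quadLaurent_inv {K : Type*} [Field K] (a b c d e z : K) :
    quadLaurent a b c d e z⁻¹ = quadLaurent e d c b a z := by
  simp only [quadLaurent, div_eq_mul_inv, inv_pow, inv_inv]
  ring

lemma Complex.re_quadLaurent_ofReal (a b c d e : ℂ) (x : ℝ) :
    (quadLaurent a b c d e (x : ℂ)).re = quadLaurent a.re b.re c.re d.re e.re x := by
  simp only [quadLaurent, ← ofReal_pow, add_re, mul_comm _ (x : ℂ),
    mul_comm _ ((x ^ 2 : ℝ) : ℂ), re_ofReal_mul, div_ofReal_re]
  ring

lemma Complex.log_norm_zpow_mul_exp {z : ℂ} (hz : z ≠ 0) (m : ℤ) (w : ℂ) :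
    Real.log ‖z ^ m * exp w‖ = m * Real.log ‖z‖ + w.re := by
  rw [norm_mul, norm_zpow, norm_exp, Real.log_mul (by positivity) (Real.exp_ne_zero _),
    Real.log_zpow, Real.log_exp]

lemma eq_zero_of_tendsto_mul_add_isLittleO {α : Type*} {l : Filter α} [l.NeBot]
    {h r : α → ℝ} {c L : ℝ}
    (hh : Tendsto h l atTop) (hr : r =o[l] h)
    (hlim : Tendsto (fun x => c * h x + r x) l (𝓝 L)) : c = 0 := by
  have hc : Tendsto (fun x => (c * h x + r x) / h x) l (𝓝 c) := by
    have := (tendsto_const_nhds (x := c)).add hr.tendsto_div_nhds_zero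
    rw [add_zero] at this
    refine this.congr' ?_
    filter_upwards [hh.eventually_ne_atTop 0] with x hx
    field_simp
  exact tendsto_nhds_unique hc (hlim.div_atTop hh)

lemma coeffs_eq_zero_of_tendsto_quadLaurent_add_log {A B C D E M : ℝ}
    (h : Tendsto (fun x => M * Real.log x + quadLaurent A B C D E x) atTop (𝓝 0)) :
    A = 0 ∧ B = 0 ∧ C = 0 ∧ M = 0 := by
  set tail : ℝ → ℝ := fun x => C + D / x + E / x ^ 2
  have htail : Tendsto tail atTop (𝓝 C) := by
    simpa using ((tendsto_const_nhds (x := C)).add (tendsto_const_nhds.div_atTop tendsto_id)).add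
      (tendsto_const_nhds (x := E).div_atTop (tendsto_pow_atTop two_ne_zero))
  have htailO : tail =O[atTop] fun _ => (1 : ℝ) := htail.isBigO_one ℝ
  have hone_log : (fun _ => (1 : ℝ)) =o[atTop] Real.log :=
    (isLittleO_one_left_iff ℝ).2 (tendsto_norm_atTop_atTop.comp Real.tendsto_log_atTop)
  have hone_id : (fun _ => (1 : ℝ)) =o[atTop] id := isLittleO_const_id_atTop 1
  have hid_sq : (id : ℝ → ℝ) =o[atTop] fun x => x ^ 2 :=
    (isLittleO_pow_pow_atTop_of_lt one_lt_two).congr_left fun x => pow_one x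
  have hA : A = 0 := by
    refine eq_zero_of_tendsto_mul_add_isLittleO (tendsto_pow_atTop two_ne_zero)
      (r := fun x => B * x + M * Real.log x + tail x) ?_
      (h.congr fun x => by simp only [quadLaurent, tail]; ring)
    exact ((hid_sq.const_mul_left B).add
      ((Real.isLittleO_log_id_atTop.trans hid_sq).const_mul_left M)).add
      (htailO.trans_isLittleO (hone_id.trans hid_sq))
  have hB : B = 0 := by
    refine eq_zero_of_tendsto_mul_add_isLittleO tendsto_id
      (r := fun x => M * Real.log x + tail x) ?_
      (h.congr fun x => by simp only [quadLaurent, tail, hA, id]; ring)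
    exact (Real.isLittleO_log_id_atTop.const_mul_left M).add (htailO.trans_isLittleO hone_id)
  have hM : M = 0 :=
    eq_zero_of_tendsto_mul_add_isLittleO Real.tendsto_log_atTop (htailO.trans_isLittleO hone_log)
      (h.congr fun x => by simp only [quadLaurent, tail, hA, hB]; ring)
  refine ⟨hA, hB, tendsto_nhds_unique htail (h.congr fun x => ?_), hM⟩
  simp only [quadLaurent, tail, hA, hB, hM]; ring

lemma exp_add_exp_inv_sub_one_pos {x : ℝ} (hx : 0 < x) :
    0 < Real.exp x + Real.exp x⁻¹ - 1 := by
  linarith [Real.add_one_lt_exp hx.ne', Real.exp_pos x⁻¹]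

lemma Complex.norm_exp_add_exp_one_div_sub_one_ofReal {x : ℝ} (hx : 0 < x) :
    ‖exp (x : ℂ) + exp (1 / x) - 1‖ = Real.exp x + Real.exp x⁻¹ - 1 := by
  have : exp (x : ℂ) + exp (1 / x) - 1 = ((Real.exp x + Real.exp x⁻¹ - 1 : ℝ) : ℂ) := by
    push_cast [one_div]; rfl
  rw [this, norm_real, Real.norm_of_nonneg (exp_add_exp_inv_sub_one_pos hx).le]

lemma tendsto_log_exp_add_exp_inv_sub_one_sub_self :
    Tendsto (fun x => Real.log (Real.exp x + Real.exp x⁻¹ - 1) - x) atTop (𝓝 0) := by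
  have hsmall : Tendsto (fun x => (Real.exp x⁻¹ - 1) * Real.exp (-x)) atTop (𝓝 0) := by
    have h : Tendsto (fun x => Real.exp x⁻¹ - 1) atTop (𝓝 0) := by
      simpa using ((Real.continuous_exp.tendsto 0).comp tendsto_inv_atTop_zero).sub_const 1
    simpa using h.mul Real.tendsto_exp_neg_atTop_nhds_zero
  have hlog :
      Tendsto (fun x => Real.log (1 + (Real.exp x⁻¹ - 1) * Real.exp (-x))) atTop (𝓝 0) := by
    have h1 : Tendsto (fun x => 1 + (Real.exp x⁻¹ - 1) * Real.exp (-x)) atTop (𝓝 1) := by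
      simpa using hsmall.const_add 1
    simpa [Function.comp_def] using (Real.continuousAt_log one_ne_zero).tendsto.comp h1
  refine hlog.congr' ?_
  filter_upwards [eventually_gt_atTop 0] with x hx
  have hinv : 0 < Real.exp x⁻¹ - 1 := sub_pos.2 (Real.one_lt_exp_iff.2 (inv_pos.2 hx))
  have hfactor : Real.exp x + Real.exp x⁻¹ - 1 =
      Real.exp x * (1 + (Real.exp x⁻¹ - 1) * Real.exp (-x)) := by
    rw [Real.exp_neg]; field_simp; ring
  rw [hfactor, Real.log_mul (Real.exp_ne_zero x) (by positivity), Real.log_exp]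
  ring

lemma coeffs_of_log_exp_add_exp_inv_sub_one_eq_atTop {A B C D E M : ℝ}
    (h : ∀ x : ℝ, 0 < x →
      Real.log (Real.exp x + Real.exp x⁻¹ - 1) = M * Real.log x + quadLaurent A B C D E x) :
    A = 0 ∧ B = 1 ∧ C = 0 := by
  have hlim : Tendsto (fun x => M * Real.log x + quadLaurent A (B - 1) C D E x) atTop (𝓝 0) := by
    refine tendsto_log_exp_add_exp_inv_sub_one_sub_self.congr' ?_
    filter_upwards [eventually_gt_atTop 0] with x hx
    rw [h x hx]
    simp only [quadLaurent]
    ring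
  obtain ⟨hA, hB, hC, -⟩ := coeffs_eq_zero_of_tendsto_quadLaurent_add_log hlim
  exact ⟨hA, by linarith, hC⟩

/-- The left-hand side is invariant under `x ↦ x⁻¹`, so the expansion at `∞` also pins down
the coefficients at `0`. -/
lemma coeffs_of_log_exp_add_exp_inv_sub_one_eq {A B C D E M : ℝ}
    (h : ∀ x : ℝ, 0 < x →
      Real.log (Real.exp x + Real.exp x⁻¹ - 1) = M * Real.log x + quadLaurent A B C D E x) :
    A = 0 ∧ B = 1 ∧ C = 0 ∧ D = 1 ∧ E = 0 := by
  have hsymm : ∀ x : ℝ, 0 < x →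
      Real.log (Real.exp x + Real.exp x⁻¹ - 1) = -M * Real.log x + quadLaurent E D C B A x := by
    intro x hx
    have := h x⁻¹ (inv_pos.2 hx)
    rw [inv_inv, Real.log_inv, quadLaurent_inv, add_comm (Real.exp x⁻¹)] at this
    rw [this]
    ring
  obtain ⟨hA, hB, hC⟩ := coeffs_of_log_exp_add_exp_inv_sub_one_eq_atTop h
  obtain ⟨hE, hD, -⟩ := coeffs_of_log_exp_add_exp_inv_sub_one_eq_atTop hsymm
  exact ⟨hA, hB, hC, hD, hE⟩

lemma log_two_mul_exp_one_sub_one_lt_two : Real.log (2 * Real.exp 1 - 1) < 2 := by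
  have hsq : 0 < (Real.exp 1 - 1) ^ 2 := pow_pos (sub_pos.2 (Real.one_lt_exp_iff.2 one_pos)) 2
  have hexp_two : Real.exp 2 = Real.exp 1 ^ 2 := by
    rw [← Real.exp_nat_mul]; norm_num
  rw [Real.log_lt_iff_lt_exp (by linarith [Real.add_one_le_exp 1]), hexp_two]
  nlinarith

theorem no_laurent_quadratic_exponent_general (m : ℤ) (Φ φ : ℂ → ℂ)
    (hΦdef : ∀ z : ℂ, z ≠ 0 → Φ z = Complex.exp z + Complex.exp (1 / z) - 1)
    (hfac : ∀ z : ℂ, z ≠ 0 → Φ z = z ^ m * Complex.exp (φ z)) :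
    ¬ ∃ a b c d e' : ℂ, ∀ z : ℂ, z ≠ 0 →
      φ z = a * z ^ 2 + b * z + c + d / z + e' / z ^ 2 := by
  rintro ⟨a, b, c, d, e', hq⟩
  have hreal : ∀ x : ℝ, 0 < x → Real.log (Real.exp x + Real.exp x⁻¹ - 1) =
      m * Real.log x + quadLaurent a.re b.re c.re d.re e'.re x := by
    intro x hx
    have hx0 : (x : ℂ) ≠ 0 := ofReal_ne_zero.2 hx.ne'
    rw [← norm_exp_add_exp_one_div_sub_one_ofReal hx, ← hΦdef _ hx0, hfac _ hx0,
      log_norm_zpow_mul_exp hx0, hq _ hx0, norm_real, Real.norm_of_nonneg hx.le,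
      ← re_quadLaurent_ofReal]
    rfl
  obtain ⟨hA, hB, hC, hD, hE⟩ := coeffs_of_log_exp_add_exp_inv_sub_one_eq hreal
  have h1 := hreal 1 one_pos
  simp only [quadLaurent, hA, hB, hC, hD, hE] at h1
  norm_num [← two_mul] at h1
  exact log_two_mul_exp_one_sub_one_lt_two.ne h1

/-- If `Φ(z) = e^z + e^(1/z) - 1` admits a factorization `Φ(z) = z^m e^(φ z)` on
`ℂ \ {0}` with `Φ` never vanishing there and `φ` analytic there, then `φ` cannot be of
the form `a z² + b z + c + d/z + e'/z²`. -/
theorem no_laurent_quadratic_exponent (m : ℤ) (Φ φ : ℂ → ℂ)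
    (hΦdef : ∀ z : ℂ, z ≠ 0 → Φ z = Complex.exp z + Complex.exp (1 / z) - 1)
    (hΦa : AnalyticOnNhd ℂ Φ {z : ℂ | z ≠ 0})
    (hφa : AnalyticOnNhd ℂ φ {z : ℂ | z ≠ 0})
    (hne : ∀ z : ℂ, z ≠ 0 → Φ z ≠ 0)
    (hfac : ∀ z : ℂ, z ≠ 0 → Φ z = z ^ m * Complex.exp (φ z)) :
    ¬ ∃ a b c d e' : ℂ, ∀ z : ℂ, z ≠ 0 →
      φ z = a * z ^ 2 + b * z + c + d / z + e' / z ^ 2 :=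
  no_laurent_quadratic_exponent_general m Φ φ hΦdef hfac
end
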